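/- arXiv:2404.04574 — 2 statements merged into one kernel-verified Lean document; each statement's English description precedes it below -/
import Mathlib

section
/- Let X be a metric space and {E_n} a sequence of connected subsets of X such that ⋃_{n≥1} E_n is precompact and liminf_{n→∞} E_n ≠ ∅. Then limsup_{n→∞} E_n is nonempty, closed, and connected, where liminf E_n = {x ∈ X : lim_n dist(x, E_n) = 0} and limsup E_n = {x ∈ X : liminf_n dist(x, E_n) = 0}. -/
open Filter Topology

/-- Whyburn's theorem. If `{Eₙ}` is a sequence of connected subsets
of a metric space whose union is precompact and whose `liminf` is nonempty, then the
`limsup` (the set of points `x` with `liminf dist(x, Eₙ) = 0`) is nonempty, closed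
and connected. -/
theorem stmt1 {X : Type*} [MetricSpace X] (E : ℕ → Set X)
    (hconn : ∀ n, IsConnected (E n))
    (hpre : IsCompact (closure (⋃ n, E n)))
    (hliminf :
      {x : X | Tendsto (fun n => Metric.infDist x (E n)) atTop (𝓝 0)}.Nonempty) :
    {x : X | liminf (fun n => Metric.infDist x (E n)) atTop = 0}.Nonempty ∧
    IsClosed {x : X | liminf (fun n => Metric.infDist x (E n)) atTop = 0} ∧
    IsConnected {x : X | liminf (fun n => Metric.infDist x (E n)) atTop = 0} := by
  classical
  set L := {x : X | liminf (fun n => Metric.infDist x (E n)) atTop = 0} with hLdef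
  have hEne : ∀ n, (E n).Nonempty := fun n => (hconn n).nonempty
  have hEK : ∀ n, E n ⊆ closure (⋃ n, E n) := fun n =>
    (Set.subset_iUnion E n).trans subset_closure
  -- boundedness of the distance sequence
  have hbdd : ∀ x : X, IsBoundedUnder (· ≤ ·) atTop (fun n => Metric.infDist x (E n)) := by
    intro x
    obtain ⟨r, hr⟩ := hpre.isBounded.subset_closedBall x
    refine ⟨r, Filter.eventually_map.2 (Filter.Eventually.of_forall fun n => ?_)⟩
    obtain ⟨y, hy⟩ := hEne n
    have hyr : dist x y ≤ r := by
      have := hr (hEK n hy)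
      simpa [Metric.mem_closedBall, dist_comm] using this
    exact (Metric.infDist_le_dist_of_mem hy).trans hyr
  have hbddlow : ∀ x : X, IsBoundedUnder (· ≥ ·) atTop (fun n => Metric.infDist x (E n)) :=
    fun x => ⟨0, Filter.eventually_map.2 (Filter.Eventually.of_forall fun n => Metric.infDist_nonneg)⟩
  -- membership characterization
  have hmem : ∀ x : X,
      x ∈ L ↔ ∀ ε > 0, ∃ᶠ n in atTop, Metric.infDist x (E n) < ε := by
    intro x
    constructor
    · intro hx ε hε
      by_contra h
      rw [Filter.not_frequently] at h
      have hle : ε ≤ liminf (fun n => Metric.infDist x (E n)) atTop :=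
        Filter.le_liminf_of_le ((hbdd x).isCoboundedUnder_ge)
          (h.mono fun n hn => le_of_not_gt hn)
      rw [hx] at hle
      linarith
    · intro h
      refine le_antisymm ?_ ?_
      · refine le_of_forall_pos_le_add fun ε hε => ?_
        have := Filter.liminf_le_of_frequently_le
          ((h ε hε).mono fun n hn => hn.le) (hbddlow x)
        linarith
      · exact Filter.le_liminf_of_le ((hbdd x).isCoboundedUnder_ge)
          (Filter.Eventually.of_forall fun n => Metric.infDist_nonneg)
  -- nonemptiness
  obtain ⟨x₀, hx₀⟩ := hliminf
  have hx₀L : x₀ ∈ L := by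
    rw [hmem x₀]
    intro ε hε
    exact (hx₀.eventually_lt_const hε).frequently
  -- L is a subset of the compact set
  have hLsubK : L ⊆ closure (⋃ n, E n) := by
    intro x hx
    rw [Metric.mem_closure_iff]
    intro ε hε
    obtain ⟨n, hn⟩ := ((hmem x).1 hx ε hε).exists
    obtain ⟨y, hy, hyd⟩ := (Metric.infDist_lt_iff (hEne n)).1 hn
    exact ⟨y, Set.subset_iUnion E n hy, hyd⟩
  -- closedness
  have hLclosed : IsClosed L := by
    have hEq : L = ⋂ k : ℕ, closure (⋃ n ∈ Set.Ici k, E n) := by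
      ext x
      rw [hmem x, Set.mem_iInter]
      constructor
      · intro hx k
        rw [Metric.mem_closure_iff]
        intro ε hε
        obtain ⟨n, hnk, hn⟩ := Filter.frequently_atTop.1 (hx ε hε) k
        obtain ⟨y, hy, hyd⟩ := (Metric.infDist_lt_iff (hEne n)).1 hn
        exact ⟨y, Set.mem_biUnion hnk hy, hyd⟩
      · intro hx ε hε
        rw [Filter.frequently_atTop]
        intro k
        obtain ⟨y, hy, hyd⟩ := Metric.mem_closure_iff.1 (hx k) ε hε
        simp only [Set.mem_iUnion, Set.mem_Ici, exists_prop] at hy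
        obtain ⟨n, hnk, hyn⟩ := hy
        exact ⟨n, hnk, lt_of_le_of_lt (Metric.infDist_le_dist_of_mem hyn) hyd⟩
    rw [hEq]
    exact isClosed_iInter fun k => isClosed_closure
  have hLcompact : IsCompact L := hpre.of_isClosed_subset hLclosed hLsubK
  refine ⟨⟨x₀, hx₀L⟩, hLclosed, ⟨x₀, hx₀L⟩, ?_⟩
  -- preconnectedness
  intro u v hu hv hsub hune hvne
  by_contra hne
  rw [Set.not_nonempty_iff_eq_empty] at hne
  set A := L \ v with hA
  set B := L \ u with hB
  have hAB : L ⊆ A ∪ B := by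
    intro x hx
    rcases hsub hx with h | h
    · exact Or.inl ⟨hx, fun hv' => Set.eq_empty_iff_forall_notMem.1 hne x ⟨hx, h, hv'⟩⟩
    · exact Or.inr ⟨hx, fun hu' => Set.eq_empty_iff_forall_notMem.1 hne x ⟨hx, hu', h⟩⟩
  have hAne : A.Nonempty := by
    obtain ⟨a, haL, hau⟩ := hune
    exact ⟨a, haL, fun hav => Set.eq_empty_iff_forall_notMem.1 hne a ⟨haL, hau, hav⟩⟩
  have hBne : B.Nonempty := by
    obtain ⟨b, hbL, hbv⟩ := hvne
    exact ⟨b, hbL, fun hbu => Set.eq_empty_iff_forall_notMem.1 hne b ⟨hbL, hbu, hbv⟩⟩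
  have hAclosed : IsClosed A := hLclosed.sdiff hv
  have hBclosed : IsClosed B := hLclosed.sdiff hu
  have hAcomp : IsCompact A := hLcompact.of_isClosed_subset hAclosed Set.diff_subset
  have hdisj : Disjoint A B := by
    rw [Set.disjoint_left]
    rintro x ⟨hxL, hxv⟩ ⟨-, hxu⟩
    rcases hsub hxL with h | h
    · exact hxu h
    · exact hxv h
  obtain ⟨δ, hδ, hth⟩ := hdisj.exists_thickenings hAcomp hBclosed
  set TA := Metric.thickening δ A with hTA
  set TB := Metric.thickening δ B with hTB
  -- frequently E n meets the thickening of S, for any p ∈ S ∩ L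
  have hmeet : ∀ (S : Set X) (p : X), p ∈ S → p ∈ L →
      ∃ᶠ n in atTop, (E n ∩ Metric.thickening δ S).Nonempty := by
    intro S p hpS hpL
    refine ((hmem p).1 hpL δ hδ).mono fun n hn => ?_
    obtain ⟨y, hy, hyd⟩ := (Metric.infDist_lt_iff (hEne n)).1 hn
    exact ⟨y, hy, Metric.mem_thickening_iff.2 ⟨p, hpS, by rwa [dist_comm]⟩⟩
  -- eventually E n meets the thickening of any S containing x₀
  have hmeet₀ : ∀ (S : Set X), x₀ ∈ S →
      ∀ᶠ n in atTop, (E n ∩ Metric.thickening δ S).Nonempty := by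
    intro S hS
    refine (hx₀.eventually_lt_const hδ).mono fun n hn => ?_
    obtain ⟨y, hy, hyd⟩ := (Metric.infDist_lt_iff (hEne n)).1 hn
    exact ⟨y, hy, Metric.mem_thickening_iff.2 ⟨x₀, hS, by rwa [dist_comm]⟩⟩
  have hkey : ∃ᶠ n in atTop, (E n ∩ TA).Nonempty ∧ (E n ∩ TB).Nonempty := by
    rcases hAB hx₀L with h | h
    · obtain ⟨b, hb⟩ := hBne
      exact (hmeet₀ A h).and_frequently (hmeet B b hb hb.1)
    · obtain ⟨a, ha⟩ := hAne
      exact ((hmeet₀ B h).and_frequently (hmeet A a ha ha.1)).mono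
        fun n hn => ⟨hn.2, hn.1⟩
  -- frequently there is a point of E n outside both thickenings
  have hz : ∃ᶠ n in atTop, ∃ z ∈ E n, z ∉ TA ∪ TB := by
    refine hkey.mono fun n hn => ?_
    by_contra h
    push_neg at h
    have hsub' : E n ⊆ TA ∪ TB := fun z hz => by
      by_contra hzc
      exact hzc (h z hz)
    obtain ⟨w, -, hwA, hwB⟩ := (hconn n).isPreconnected TA TB Metric.isOpen_thickening
      Metric.isOpen_thickening hsub' hn.1 hn.2
    exact Set.disjoint_left.1 hth hwA hwB
  obtain ⟨φ, hφ, hφP⟩ := Filter.extraction_of_frequently_atTop hz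
  choose z hz1 hz2 using hφP
  have hzK : ∀ k, z k ∈ closure (⋃ n, E n) := fun k => hEK _ (hz1 k)
  obtain ⟨x, hxK, ψ, hψ, hxt⟩ := hpre.tendsto_subseq hzK
  have hxL : x ∈ L := by
    rw [hmem x]
    intro ε hε
    rw [Filter.frequently_atTop]
    intro N
    have hev : ∀ᶠ k in atTop, dist (z (ψ k)) x < ε := by
      have := hxt (Metric.ball_mem_nhds x hε)
      simpa [Metric.mem_ball] using this
    obtain ⟨k, hk, hkN⟩ := (hev.and (Filter.eventually_ge_atTop N)).exists
    refine ⟨φ (ψ k), le_trans hkN ((hφ.comp hψ).le_apply), ?_⟩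
    calc Metric.infDist x (E (φ (ψ k))) ≤ dist x (z (ψ k)) :=
          Metric.infDist_le_dist_of_mem (hz1 (ψ k))
      _ < ε := by rwa [dist_comm]
  have hxnot : x ∉ TA ∪ TB := by
    have hcl : IsClosed ((TA ∪ TB)ᶜ) :=
      (Metric.isOpen_thickening.union Metric.isOpen_thickening).isClosed_compl
    exact hcl.mem_of_tendsto hxt (Filter.Eventually.of_forall fun k => hz2 (ψ k))
  rcases hAB hxL with h | h
  · exact hxnot (Or.inl (Metric.self_subset_thickening hδ A h))
  · exact hxnot (Or.inr (Metric.self_subset_thickening hδ B h))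
end

section
/- Let Ω be a bounded smooth domain with β_Ω = 1, 0 < q < 1 < p, pq > 1, and fix τ with (1−q)/q < τ < p − 1. For every Λ > 0 there exists ε̄ = ε̄(τ, Λ) > 0 such that for all ε ∈ (0, ε̄], the function φ_ε(x) = ε(φ_Ω(x) + ε^τ) satisfies −Δφ_ε ≤ φ_ε − φ_ε^p in Ω and ∂φ_ε/∂ν ≤ −λφ_ε^q on ∂Ω for every λ ∈ [0, Λ]; i.e., φ_ε is a subsolution of the problem uniformly in λ ∈ [0,Λ]. -/
/-!
The Dirichlet eigenfunction gives `-Δ(εφ_Ω) = εφ_Ω`, so in `Ω` the subsolution inequality for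
`φ_ε = ε(φ_Ω + ε^τ)` reduces to `φ_ε^p ≤ ε^{1+τ}`. Since `φ_ε ≤ ε (max φ_Ω + 1)`, this holds
once `ε^{p-1-τ} (max φ_Ω + 1)^p ≤ 1`, which is true for small `ε` because `τ < p - 1`.
On `∂Ω` we have `φ_Ω = 0`, so `φ_ε^q = ε^{(1+τ)q}` while `∂φ_ε/∂ν ≤ -c₁ε`; the boundary
inequality holds once `Λ ε^{(1+τ)q-1} ≤ c₁`, true for small `ε` because `(1-q)/q < τ`.
-/

open MeasureTheory Filter Topology

/-- The Laplacian `Δu = ∑ i ∂²u/∂xᵢ²`. -/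
noncomputable def lap {N : ℕ} (u : EuclideanSpace ℝ (Fin N) → ℝ)
    (x : EuclideanSpace ℝ (Fin N)) : ℝ :=
  ∑ i : Fin N,
    fderiv ℝ (fun y => fderiv ℝ u y (EuclideanSpace.single i (1:ℝ))) x
      (EuclideanSpace.single i (1:ℝ))

theorem gradient_const_mul_add_const {F : Type*} [NormedAddCommGroup F]
    [InnerProductSpace ℝ F] [CompleteSpace F] {φ : F → ℝ} {x : F}
    (hφ : DifferentiableAt ℝ φ x) (ε c : ℝ) :
    gradient (fun y => ε * (φ y + c)) x = ε • gradient φ x := by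
  rw [gradient, fderiv_const_mul (hφ.add_const c), fderiv_add_const]
  exact map_smul (InnerProductSpace.toDual ℝ F).symm ε _

theorem lap_const_mul_add_const {N : ℕ} {φ : EuclideanSpace ℝ (Fin N) → ℝ}
    {x : EuclideanSpace ℝ (Fin N)} (hφ : ContDiffAt ℝ 2 φ x) (ε c : ℝ) :
    lap (fun y => ε * (φ y + c)) x = ε * lap φ x := by
  rw [lap, lap, Finset.mul_sum]
  refine Finset.sum_congr rfl fun i _ => ?_
  set v := EuclideanSpace.single i (1 : ℝ)
  have hderiv : (fun y => fderiv ℝ (fun z => ε * (φ z + c)) y v)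
      =ᶠ[𝓝 x] fun y => ε * fderiv ℝ φ y v := by
    filter_upwards [hφ.eventually (by simp)] with y hy
    rw [fderiv_const_mul ((hy.differentiableAt (by simp)).add_const c), fderiv_add_const]
    rfl
  have hdiff : DifferentiableAt ℝ (fun y => fderiv ℝ φ y v) x :=
    (ContinuousLinearMap.apply ℝ ℝ v).differentiableAt.comp x
      ((hφ.fderiv_right (m := 1) (by norm_num)).differentiableAt (by norm_num))
  rw [hderiv.fderiv_eq, fderiv_const_mul hdiff]
  rfl

theorem rpow_mul_add_rpow_le {ε τ p a M : ℝ} (hε : 0 < ε) (ha : 0 ≤ a) (hp : 0 ≤ p)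
    (haM : a + ε ^ τ ≤ M) (hsmall : M ^ p * ε ^ (p - (1 + τ)) ≤ 1) :
    (ε * (a + ε ^ τ)) ^ p ≤ ε ^ (1 + τ) := by
  have hετ : 0 < ε ^ τ := Real.rpow_pos_of_pos hε τ
  have hM : 0 ≤ M := by linarith
  calc (ε * (a + ε ^ τ)) ^ p ≤ (ε * M) ^ p := by gcongr
    _ = ε ^ (1 + τ) * (M ^ p * ε ^ (p - (1 + τ))) := by
      rw [Real.mul_rpow hε.le hM, mul_left_comm, ← Real.rpow_add hε, add_sub_cancel, mul_comm]
    _ ≤ ε ^ (1 + τ) := mul_le_of_le_one_right (by positivity) hsmall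

theorem eventually_const_mul_rpow_lt {s C A : ℝ} (hs : 0 < s) (hA : 0 < A) :
    ∀ᶠ ε in 𝓝[>] (0 : ℝ), C * ε ^ s < A := by
  have h : Tendsto (fun ε : ℝ => C * ε ^ s) (𝓝[>] 0) (𝓝 0) := by
    simpa using ((tendsto_nhdsWithin_of_tendsto_nhds tendsto_id).rpow_const_nhds_zero hs).const_mul C
  exact h.eventually (gt_mem_nhds hA)

section Subsolution

variable {N : ℕ} {φ : EuclideanSpace ℝ (Fin N) → ℝ} {x : EuclideanSpace ℝ (Fin N)}
  {ε τ : ℝ}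

theorem neg_lap_le_of_eigenfunction {p M : ℝ} (hφ : ContDiffAt ℝ 2 φ x)
    (heig : -lap φ x = φ x) (hφx : 0 ≤ φ x) (hε : 0 < ε) (hp : 0 ≤ p)
    (hM : φ x + ε ^ τ ≤ M) (hsmall : M ^ p * ε ^ (p - (1 + τ)) ≤ 1) :
    -lap (fun y => ε * (φ y + ε ^ τ)) x ≤ ε * (φ x + ε ^ τ) - (ε * (φ x + ε ^ τ)) ^ p := by
  have hpow := rpow_mul_add_rpow_le hε hφx hp hM hsmall
  rw [Real.rpow_add hε, Real.rpow_one] at hpow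
  rw [lap_const_mul_add_const hφ, neg_mul_eq_mul_neg, heig]
  linarith

theorem inner_gradient_le_of_eq_zero {q lam c : ℝ} {n : EuclideanSpace ℝ (Fin N)}
    (hφ : DifferentiableAt ℝ φ x) (hφx : φ x = 0)
    (hc : c ≤ -inner ℝ (gradient φ x) n) (hε : 0 < ε)
    (hsmall : lam * ε ^ ((1 + τ) * q - 1) ≤ c) :
    inner ℝ (gradient (fun y => ε * (φ y + ε ^ τ)) x) n ≤ -lam * (ε * (φ x + ε ^ τ)) ^ q := by
  have hpow : (ε * ε ^ τ) ^ q = ε ^ ((1 + τ) * q - 1) * ε := by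
    rw [← Real.rpow_add_one hε.ne', sub_add_cancel, Real.rpow_mul hε.le, Real.rpow_add hε,
      Real.rpow_one]
  rw [gradient_const_mul_add_const hφ, real_inner_smul_left, hφx, zero_add, hpow]
  nlinarith

end Subsolution

theorem stmt14_general {N : ℕ} (Ω : Set (EuclideanSpace ℝ (Fin N)))
    (hΩbd : Bornology.IsBounded Ω)
    (p q τ : ℝ) (hq0 : 0 < q) (hq1 : q < 1)
    (hτ1 : (1 - q) / q < τ) (hτ2 : τ < p - 1)
    -- outer unit normal on ∂Ω
    (ν : EuclideanSpace ℝ (Fin N) → EuclideanSpace ℝ (Fin N))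
    -- the principal Dirichlet eigenfunction φ_Ω for β_Ω = 1
    (φΩ : EuclideanSpace ℝ (Fin N) → ℝ)
    (hφC2 : ∀ x ∈ closure Ω, ContDiffAt ℝ 2 φΩ x)
    (hφcont : ContinuousOn φΩ (closure Ω))
    (heig : ∀ x ∈ Ω, -lap φΩ x = φΩ x)
    (hφpos : ∀ x ∈ Ω, 0 < φΩ x)
    (hφbdry : ∀ x ∈ frontier Ω, φΩ x = 0)
    -- c₁ := min_{∂Ω} (−∂φ_Ω/∂ν) > 0
    (hc₁ : ∃ c₁ > (0:ℝ), ∀ x ∈ frontier Ω,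
      c₁ ≤ -(inner ℝ (gradient φΩ x) (ν x) : ℝ)) :
    ∀ Λ > (0:ℝ), ∃ εbar > (0:ℝ), ∀ ε : ℝ, 0 < ε → ε ≤ εbar →
      (∀ x ∈ Ω,
        -lap (fun y => ε * (φΩ y + ε ^ τ)) x ≤
          ε * (φΩ x + ε ^ τ) - (ε * (φΩ x + ε ^ τ)) ^ p) ∧
      (∀ lam : ℝ, 0 ≤ lam → lam ≤ Λ → ∀ x ∈ frontier Ω,
        (inner ℝ (gradient (fun y => ε * (φΩ y + ε ^ τ)) x) (ν x) : ℝ) ≤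
          -lam * (ε * (φΩ x + ε ^ τ)) ^ q) := by
  obtain ⟨c₁, hc₁pos, hc₁⟩ := hc₁
  intro Λ _
  obtain ⟨M, hM⟩ := hΩbd.isCompact_closure.bddAbove_image hφcont
  have hτ : 0 < τ := (div_pos (sub_pos.2 hq1) hq0).trans hτ1
  have hτq : 0 < (1 + τ) * q - 1 := by
    have := (div_lt_iff₀ hq0).1 hτ1
    linarith
  have hsmall : ∀ᶠ ε in 𝓝[>] (0 : ℝ), 1 * ε ^ τ < 1 ∧
      (M + 1) ^ p * ε ^ (p - (1 + τ)) < 1 ∧ Λ * ε ^ ((1 + τ) * q - 1) < c₁ :=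
    (eventually_const_mul_rpow_lt hτ one_pos).and <|
      (eventually_const_mul_rpow_lt (by linarith) one_pos).and
        (eventually_const_mul_rpow_lt hτq hc₁pos)
  obtain ⟨εbar, hεbar, hsub⟩ := mem_nhdsGT_iff_exists_Ioc_subset.1 hsmall
  refine ⟨εbar, hεbar, fun ε hε hεle => ?_⟩
  obtain ⟨hετ, hint, hbdry⟩ := hsub ⟨hε, hεle⟩
  refine ⟨fun x hx => ?_, fun lam _ hlam x hx => ?_⟩
  · have hxM := hM (Set.mem_image_of_mem φΩ (subset_closure hx))
    exact neg_lap_le_of_eigenfunction (hφC2 x (subset_closure hx)) (heig x hx)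
      (hφpos x hx).le hε (by linarith) (by linarith) hint.le
  · have hxc := frontier_subset_closure hx
    exact inner_gradient_le_of_eq_zero ((hφC2 x hxc).differentiableAt (by simp)) (hφbdry x hx)
      (hc₁ x hx) hε ((by gcongr : lam * ε ^ ((1 + τ) * q - 1) ≤ _).trans hbdry.le)

/-- Lemma `prop:sub`, subsolution part. Assume `β_Ω = 1`,
`0 < q < 1 < p`, `pq > 1`, and `(1−q)/q < τ < p−1`.  For every `Λ > 0` there is
`ε̄ > 0` such that for all `ε ∈ (0, ε̄]` the function `φ_ε = ε(φ_Ω + ε^τ)` satisfies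
`−Δφ_ε ≤ φ_ε − φ_ε^p` in `Ω` and `∂φ_ε/∂ν ≤ −λφ_ε^q` on `∂Ω` for every
`λ ∈ [0, Λ]`. -/
theorem stmt14 {N : ℕ} (Ω : Set (EuclideanSpace ℝ (Fin N)))
    (hΩopen : IsOpen Ω) (hΩbd : Bornology.IsBounded Ω) (hΩne : Ω.Nonempty)
    (p q τ : ℝ) (hp : 1 < p) (hq0 : 0 < q) (hq1 : q < 1) (hpq : 1 < p * q)
    (hτ1 : (1 - q) / q < τ) (hτ2 : τ < p - 1)
    -- outer unit normal on ∂Ω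
    (ν : EuclideanSpace ℝ (Fin N) → EuclideanSpace ℝ (Fin N))
    -- the principal Dirichlet eigenfunction φ_Ω for β_Ω = 1
    (φΩ : EuclideanSpace ℝ (Fin N) → ℝ)
    (hφC2 : ∀ x ∈ closure Ω, ContDiffAt ℝ 2 φΩ x)
    (hφcont : ContinuousOn φΩ (closure Ω))
    (heig : ∀ x ∈ Ω, -lap φΩ x = φΩ x)
    (hφpos : ∀ x ∈ Ω, 0 < φΩ x)
    (hφbdry : ∀ x ∈ frontier Ω, φΩ x = 0)
    -- c₁ := min_{∂Ω} (−∂φ_Ω/∂ν) > 0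
    (hc₁ : ∃ c₁ > (0:ℝ), ∀ x ∈ frontier Ω,
      c₁ ≤ -(inner ℝ (gradient φΩ x) (ν x) : ℝ)) :
    ∀ Λ > (0:ℝ), ∃ εbar > (0:ℝ), ∀ ε : ℝ, 0 < ε → ε ≤ εbar →
      (∀ x ∈ Ω,
        -lap (fun y => ε * (φΩ y + ε ^ τ)) x ≤
          ε * (φΩ x + ε ^ τ) - (ε * (φΩ x + ε ^ τ)) ^ p) ∧
      (∀ lam : ℝ, 0 ≤ lam → lam ≤ Λ → ∀ x ∈ frontier Ω,
        (inner ℝ (gradient (fun y => ε * (φΩ y + ε ^ τ)) x) (ν x) : ℝ) ≤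
          -lam * (ε * (φΩ x + ε ^ τ)) ^ q) :=
  stmt14_general Ω hΩbd p q τ hq0 hq1 hτ1 hτ2 ν φΩ hφC2 hφcont heig hφpos hφbdry hc₁
end
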